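/- arXiv:1712.09341 — 4 statements merged into one kernel-verified Lean document; each statement's English description precedes it below -/
import Mathlib

section
/- For all nonnegative integers n and all real numbers t, m, r, the identity (mt+r)^n = \sum_{k=0}^n m^k W_{m,r}(n,k) \cdot t(t-1)\cdots(t-k+1) holds, where W_{m,r}(n,k) are defined by the recurrence W_{m,r}(n,k) = W_{m,r}(n-1,k-1) + (mk+r) W_{m,r}(n-1,k) with W_{m,r}(0,0)=1 and W_{m,r}(n,k)=0 for k<0 or k>n. -/
/-- The r-Whitney numbers of the second kind, defined by the triangular recurrence
`W m r n k = W m r (n-1) (k-1) + (m*k+r) * W m r (n-1) k`, with `W m r 0 0 = 1`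
and vanishing for `k > n` (and for "k < 0", encoded by the `n+1, 0` case). -/
noncomputable def rWhitney (m r : ℝ) : ℕ → ℕ → ℝ
  | 0, 0 => 1
  | 0, _ + 1 => 0
  | n + 1, 0 => r * rWhitney m r n 0
  | n + 1, k + 1 => rWhitney m r n k + (m * (k + 1) + r) * rWhitney m r n (k + 1)

lemma rWhitney_eq_zero (m r : ℝ) : ∀ n k : ℕ, n < k → rWhitney m r n k = 0 := by
  intro n
  induction n with
  | zero =>
    intro k hk
    match k, hk with
    | k + 1, _ => simp [rWhitney]
  | succ n ih =>
    intro k hk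
    match k, hk with
    | k + 1, hk =>
      have h1 : rWhitney m r n k = 0 := ih k (by omega)
      have h2 : rWhitney m r n (k + 1) = 0 := ih (k + 1) (by omega)
      simp [rWhitney, h1, h2]

theorem rWhitney_horizontal_generating_function (n : ℕ) (t m r : ℝ) :
    (m * t + r) ^ n =
      ∑ k ∈ Finset.range (n + 1),
        m ^ k * rWhitney m r n k * ∏ i ∈ Finset.range k, (t - i) := by
  induction n with
  | zero => simp [rWhitney]
  | succ n ih =>
    have key : ∑ k ∈ Finset.range (n + 2),
        m ^ k * rWhitney m r (n + 1) k * ∏ i ∈ Finset.range k, (t - i)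
        = (m * t + r) * ∑ k ∈ Finset.range (n + 1),
            m ^ k * rWhitney m r n k * ∏ i ∈ Finset.range k, (t - i) := by
      rw [Finset.sum_range_succ' _ (n + 1)]
      rw [Finset.mul_sum]
      have expand : ∀ k ∈ Finset.range (n + 1),
          m ^ (k + 1) * rWhitney m r (n + 1) (k + 1) * ∏ i ∈ Finset.range (k + 1), (t - i)
          = m ^ (k + 1) * rWhitney m r n k * ∏ i ∈ Finset.range (k + 1), (t - i)
            + m ^ (k + 1) * ((m * (k + 1) + r) * rWhitney m r n (k + 1))
              * ∏ i ∈ Finset.range (k + 1), (t - i) := by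
        intro k _
        rw [show rWhitney m r (n+1) (k+1) = rWhitney m r n k + (m * (k + 1) + r) * rWhitney m r n (k + 1) from rfl]
        ring
      rw [Finset.sum_congr rfl expand, Finset.sum_add_distrib]
      have lhsexpand : ∀ k ∈ Finset.range (n + 1),
          (m * t + r) * (m ^ k * rWhitney m r n k * ∏ i ∈ Finset.range k, (t - i))
          = m ^ (k + 1) * rWhitney m r n k * ∏ i ∈ Finset.range (k + 1), (t - i)
            + (m * k + r) * (m ^ k * rWhitney m r n k * ∏ i ∈ Finset.range k, (t - i)) := by
        intro k _
        rw [Finset.prod_range_succ]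
        ring
      rw [Finset.sum_congr rfl lhsexpand, Finset.sum_add_distrib]
      have second : ∑ k ∈ Finset.range (n + 1),
          m ^ (k + 1) * ((m * (↑k + 1) + r) * rWhitney m r n (k + 1))
            * ∏ i ∈ Finset.range (k + 1), (t - ↑i)
          + m ^ 0 * rWhitney m r (n + 1) 0 * ∏ i ∈ Finset.range 0, (t - ↑i)
          = ∑ k ∈ Finset.range (n + 1),
            (m * k + r) * (m ^ k * rWhitney m r n k * ∏ i ∈ Finset.range k, (t - i)) := by
        have : ∑ k ∈ Finset.range (n + 2),
            (m * k + r) * (m ^ k * rWhitney m r n k * ∏ i ∈ Finset.range k, (t - i))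
            = ∑ k ∈ Finset.range (n + 1),
              (m * k + r) * (m ^ k * rWhitney m r n k * ∏ i ∈ Finset.range k, (t - i)) := by
          rw [Finset.sum_range_succ, rWhitney_eq_zero m r n (n + 1) (by omega)]
          ring
        rw [← this, Finset.sum_range_succ' _ (n + 1)]
        rw [show rWhitney m r (n + 1) 0 = r * rWhitney m r n 0 from rfl]
        push_cast
        congr 1
        · apply Finset.sum_congr rfl
          intro k _
          ring
        · simp
      linarith [second]
    rw [pow_succ, mul_comm ((m*t+r)^n), ih, key]
end

section
/- Let X and D be the operators on polynomials (or formal power series) defined by (Xf)(x) = x f(x) and (Df)(x) = f'(x). Then for every nonnegative integer n and real numbers m, r, the operator identity (mXD + r)^n = \sum_{k=0}^n m^k W_{m,r}(n,k) X^k D^k holds. -/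
theorem rWhitney_operator_identity (n : ℕ) (m r : ℝ)
    (X D : Module.End ℝ (Polynomial ℝ))
    (hX : ∀ p : Polynomial ℝ, X p = Polynomial.X * p)
    (hD : ∀ p : Polynomial ℝ, D p = Polynomial.derivative p) :
    (m • (X * D) + r • (1 : Module.End ℝ (Polynomial ℝ))) ^ n =
      ∑ k ∈ Finset.range (n + 1), (m ^ k * rWhitney m r n k) • (X ^ k * D ^ k) := by
  have hDX : D * X = X * D + 1 := by
    apply LinearMap.ext
    intro p
    simp [Module.End.mul_apply, hX, hD, Polynomial.derivative_mul]
    ring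
  have hXDX : ∀ k : ℕ, (X * D) * X ^ k = X ^ k * (X * D) + (k : ℝ) • X ^ k := by
    intro k
    induction k with
    | zero => simp
    | succ k ih =>
      calc (X * D) * X ^ (k+1) = ((X * D) * X ^ k) * X := by rw [pow_succ, ← mul_assoc]
        _ = (X ^ k * (X * D) + (k:ℝ) • X ^ k) * X := by rw [ih]
        _ = X ^ k * (X * (D * X)) + (k:ℝ) • (X ^ k * X) := by
            rw [add_mul, smul_mul_assoc]; noncomm_ring
        _ = X ^ k * (X * (X * D)) + X ^ k * X + (k:ℝ) • (X ^ k * X) := by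
            rw [hDX]; noncomm_ring
        _ = X ^ (k+1) * (X * D) + ((k:ℝ)+1) • X ^ (k+1) := by
            rw [pow_succ]
            rw [add_smul, one_smul]
            noncomm_ring
      push_cast
      ring_nf
  have key : ∀ k : ℕ, (m • (X * D) + r • (1 : Module.End ℝ (Polynomial ℝ))) * (X ^ k * D ^ k)
      = m • (X ^ (k+1) * D ^ (k+1)) + (m * (k:ℝ) + r) • (X ^ k * D ^ k) := by
    intro k
    rw [add_mul, smul_mul_assoc, smul_mul_assoc, one_mul, ← mul_assoc, hXDX k, add_mul,
      smul_mul_assoc]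
    have h1 : X ^ k * (X * D) * D ^ k = X ^ (k+1) * D ^ (k+1) := by
      rw [pow_succ X, pow_succ' D]; noncomm_ring
    rw [h1]
    rw [smul_add, smul_smul, add_smul]
    abel
  induction n with
  | zero => simp [rWhitney]
  | succ n ih =>
    rw [pow_succ', ih, Finset.mul_sum]
    have step : ∀ k ∈ Finset.range (n+1),
        (m • (X * D) + r • (1 : Module.End ℝ (Polynomial ℝ))) *
          ((m ^ k * rWhitney m r n k) • (X ^ k * D ^ k))
        = (m ^ (k+1) * rWhitney m r n k) • (X ^ (k+1) * D ^ (k+1))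
          + (m ^ k * rWhitney m r n k * (m * (k:ℝ) + r)) • (X ^ k * D ^ k) := by
      intro k _
      rw [mul_smul_comm, key k, smul_add, smul_smul, smul_smul]
      congr 1
      · congr 1; ring
    rw [Finset.sum_congr rfl step, Finset.sum_add_distrib]
    set P : ℕ → Module.End ℝ (Polynomial ℝ) :=
      fun k => (m ^ (k+1) * rWhitney m r n k) • (X ^ (k+1) * D ^ (k+1)) with hP
    set Q : ℕ → Module.End ℝ (Polynomial ℝ) :=
      fun k => (m ^ k * rWhitney m r n k * (m * (k:ℝ) + r)) • (X ^ k * D ^ k) with hQ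
    set S : ℕ → Module.End ℝ (Polynomial ℝ) :=
      fun k => (m ^ k * rWhitney m r (n+1) k) • (X ^ k * D ^ k) with hS
    have hQsum : ∑ k ∈ Finset.range (n+1), Q k
        = (∑ k ∈ Finset.range (n+1), Q (k+1)) + Q 0 := by
      have h2 : ∑ k ∈ Finset.range (n+2), Q k
          = (∑ k ∈ Finset.range (n+1), Q (k+1)) + Q 0 := Finset.sum_range_succ' Q (n+1)
      have h3 : ∑ k ∈ Finset.range (n+2), Q k
          = (∑ k ∈ Finset.range (n+1), Q k) + Q (n+1) := Finset.sum_range_succ Q (n+1)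
      have h4 : Q (n+1) = 0 := by
        simp only [hQ, rWhitney_eq_zero m r n (n+1) (by omega)]
        simp
      rw [h4, add_zero] at h3
      rw [← h3, h2]
    rw [hQsum, Finset.sum_range_succ' S (n+1)]
    rw [← add_assoc, ← Finset.sum_add_distrib]
    congr 1
    · apply Finset.sum_congr rfl
      intro k _
      simp only [hP, hQ, hS]
      rw [← add_smul]
      congr 1
      simp only [rWhitney]
      push_cast
      ring
    · simp only [hQ, hS]
      congr 1
      simp only [rWhitney]
      push_cast
      ring
end

section
/- For all nonnegative integers n and \ell, real numbers m, r, x, the r-Dowling polynomials satisfy D_{m,r}(n+\ell; x) = \sum_{j=0}^{\ell} \sum_{k=0}^{n} W_{m,r}(\ell, j) \binom{n}{k} (mj)^{n-k} D_{m,r}(k; x) x^j. -/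
/-- The r-Dowling polynomial: the sum over k ≤ n of `W m r n k * x^k`. -/
noncomputable def rDowling (m r : ℝ) (n : ℕ) (x : ℝ) : ℝ :=
  ∑ k ∈ Finset.range (n + 1), rWhitney m r n k * x ^ k

/-! The polynomials `Dₙ = ∑ₖ W(n,k) Xᵏ` form the orbit `Aⁿ 1` of the operator
`A = X + r + m X d/dX` (`dowlingOp m r`). Since `A (Xʲ p) = Xʲ (A + m j) p`, also
`Aⁿ (Xʲ p) = Xʲ (A + m j)ⁿ p`, and the binomial expansion of `(A + m j)ⁿ` at `p = 1` gives
`Aⁿ Xʲ = Xʲ ∑ₖ C(n,k) (m j)ⁿ⁻ᵏ Dₖ`.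
Summing over `Dₙ₊ₗ = Aⁿ Dₗ = ∑ⱼ W(ℓ,j) Aⁿ Xʲ` yields the identity. -/

open Polynomial

section

variable {R : Type*} [CommSemiring R]

theorem Module.End.add_algebraMap_pow_apply {M : Type*} [AddCommMonoid M] [Module R M]
    (f : Module.End R M) (c : R) (n : ℕ) (v : M) :
    ((f + algebraMap R (Module.End R M) c) ^ n) v =
      ∑ k ∈ Finset.range (n + 1), (n.choose k * c ^ (n - k)) • (f ^ k) v := by
  rw [(Algebra.commute_algebraMap_right c f).add_pow, LinearMap.sum_apply]
  refine Finset.sum_congr rfl fun k _ => ?_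
  rw [← map_pow, Module.End.mul_apply, Module.End.mul_apply, Module.End.natCast_apply,
    Module.algebraMap_end_apply, map_smul, map_nsmul, ← Nat.cast_smul_eq_nsmul R, smul_smul,
    mul_comm]

noncomputable def dowlingOp (m r : R) : Module.End R R[X] :=
  LinearMap.mulLeft R (X + C r) + LinearMap.mulLeft R (C m * X) * derivative

theorem dowlingOp_apply (m r : R) (p : R[X]) :
    dowlingOp m r p = (X + C r) * p + C m * X * derivative p := rfl

theorem coeff_dowlingOp_zero (m r : R) (p : R[X]) :
    (dowlingOp m r p).coeff 0 = r * p.coeff 0 := by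
  simp [dowlingOp_apply, add_mul, mul_assoc]

theorem coeff_dowlingOp_succ (m r : R) (p : R[X]) (k : ℕ) :
    (dowlingOp m r p).coeff (k + 1) = p.coeff k + (m * (k + 1) + r) * p.coeff (k + 1) := by
  simp only [dowlingOp_apply, add_mul, mul_assoc, coeff_add, coeff_X_mul, coeff_C_mul,
    coeff_derivative]
  ring

theorem dowlingOp_X_pow_mul (m r : R) (j : ℕ) (p : R[X]) :
    dowlingOp m r (X ^ j * p) = X ^ j * (dowlingOp m r p + C (m * j) * p) := by
  rcases j with _ | j
  · simp
  · simp only [dowlingOp_apply, derivative_mul, derivative_X_pow, map_mul, map_natCast]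
    simp only [Nat.add_sub_cancel, pow_succ, Nat.cast_add, Nat.cast_one]
    ring

theorem pow_dowlingOp_X_pow_mul (m r : R) (j n : ℕ) (p : R[X]) :
    (dowlingOp m r ^ n) (X ^ j * p) =
      X ^ j * ((dowlingOp m r + algebraMap R _ (m * j)) ^ n) p := by
  have hconj : SemiconjBy (LinearMap.mulLeft R (X ^ j))
      (dowlingOp m r + algebraMap R _ (m * j)) (dowlingOp m r) := by
    refine LinearMap.ext fun q => ?_
    simp [dowlingOp_X_pow_mul, Module.algebraMap_end_apply, C_mul']
  exact (LinearMap.congr_fun (hconj.pow_right n) p).symm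

end

theorem rWhitney_eq_zero_of_lt (m r : ℝ) {n k : ℕ} (h : n < k) : rWhitney m r n k = 0 := by
  induction n generalizing k with
  | zero => obtain ⟨k, rfl⟩ := Nat.exists_eq_add_of_lt h; simp [rWhitney]
  | succ n ih =>
    obtain ⟨k, rfl⟩ : ∃ k', k = k' + 1 := ⟨k - 1, by omega⟩
    rw [rWhitney, ih (by omega), ih (by omega), mul_zero, add_zero]

theorem coeff_pow_dowlingOp_one (m r : ℝ) (n k : ℕ) :
    ((dowlingOp m r ^ n) 1).coeff k = rWhitney m r n k := by
  induction n generalizing k with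
  | zero => rcases k with _ | k <;> simp [rWhitney, coeff_one]
  | succ n ih =>
    rw [pow_succ', Module.End.mul_apply]
    rcases k with _ | k
    · rw [coeff_dowlingOp_zero, ih, rWhitney]
    · rw [coeff_dowlingOp_succ, ih, ih, rWhitney]

theorem natDegree_pow_dowlingOp_one_lt (m r : ℝ) (n : ℕ) :
    ((dowlingOp m r ^ n) 1).natDegree < n + 1 :=
  Nat.lt_succ_of_le <| natDegree_le_iff_coeff_eq_zero.2 fun _ hk => by
    rw [coeff_pow_dowlingOp_one, rWhitney_eq_zero_of_lt m r hk]

theorem pow_dowlingOp_one_eq_sum (m r : ℝ) (n : ℕ) :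
    (dowlingOp m r ^ n) 1 = ∑ k ∈ Finset.range (n + 1), rWhitney m r n k • X ^ k := by
  conv_lhs => rw [as_sum_range' _ _ (natDegree_pow_dowlingOp_one_lt m r n)]
  simp [coeff_pow_dowlingOp_one, ← C_mul_X_pow_eq_monomial, C_mul']

theorem rDowling_eq_eval (m r : ℝ) (n : ℕ) (x : ℝ) :
    rDowling m r n x = ((dowlingOp m r ^ n) 1).eval x := by
  simp [pow_dowlingOp_one_eq_sum, eval_finsetSum, rDowling]

theorem rDowling_spivey (n ℓ : ℕ) (m r x : ℝ) :
    rDowling m r (n + ℓ) x =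
      ∑ j ∈ Finset.range (ℓ + 1), ∑ k ∈ Finset.range (n + 1),
        rWhitney m r ℓ j * (n.choose k : ℝ) * (m * j) ^ (n - k) *
          rDowling m r k x * x ^ j := by
  rw [rDowling_eq_eval, pow_add, Module.End.mul_apply, pow_dowlingOp_one_eq_sum, map_sum,
    eval_finsetSum]
  refine Finset.sum_congr rfl fun j _ => ?_
  rw [map_smul, ← mul_one (X ^ j), pow_dowlingOp_X_pow_mul, Module.End.add_algebraMap_pow_apply]
  simp only [eval_smul, eval_mul, eval_pow, eval_X, eval_finsetSum, ← rDowling_eq_eval,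
    smul_eq_mul, Finset.mul_sum]
  refine Finset.sum_congr rfl fun k _ => ?_
  ring
end

section
/- For all nonnegative integers n and real numbers m, r, the r-Dowling numbers satisfy the single-step recurrence obtained from the generalized Spivey formula with \ell = 1: D_{m,r}(n+1) = \sum_{k=0}^{n} \binom{n}{k} m^{n-k} D_{m,r}(k) + r\, D_{m,r}(n). -/
/-- The r-Dowling number: the sum over k ≤ n of `W m r n k`. -/
noncomputable def rDowlingNum (m r : ℝ) (n : ℕ) : ℝ :=
  ∑ k ∈ Finset.range (n + 1), rWhitney m r n k

lemma rWhitney_ss (m r : ℝ) (n k : ℕ) :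
    rWhitney m r (n + 1) (k + 1) =
      rWhitney m r n k + (m * ((k : ℝ) + 1) + r) * rWhitney m r n (k + 1) := rfl

lemma rWhitney_zero_of_lt (m r : ℝ) : ∀ n k, n < k → rWhitney m r n k = 0 := by
  intro n
  induction n with
  | zero =>
    intro k hk
    match k, hk with
    | k + 1, _ => rfl
  | succ n ih =>
    intro k hk
    match k, hk with
    | k + 1, hk =>
      rw [rWhitney_ss, ih k (by omega), ih (k + 1) (by omega)]
      ring

lemma sum_split (m : ℝ) (f : ℕ → ℝ) (n : ℕ) :
    ∑ j ∈ Finset.range (n + 2), ((n + 1).choose j : ℝ) * m ^ (n + 1 - j) * f j =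
      m * ∑ j ∈ Finset.range (n + 1), (n.choose j : ℝ) * m ^ (n - j) * f j +
      ∑ j ∈ Finset.range (n + 1), (n.choose j : ℝ) * m ^ (n - j) * f (j + 1) := by
  rw [Finset.sum_range_succ' (fun j => ((n + 1).choose j : ℝ) * m ^ (n + 1 - j) * f j) (n + 1),
    Finset.mul_sum]
  have h1 : ∀ j ∈ Finset.range (n + 1),
      ((n + 1).choose (j + 1) : ℝ) * m ^ (n + 1 - (j + 1)) * f (j + 1) =
      (n.choose j : ℝ) * m ^ (n - j) * f (j + 1) +
      (n.choose (j + 1) : ℝ) * m ^ (n - j) * f (j + 1) := by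
    intro j hj
    rw [Nat.choose_succ_succ, Nat.succ_sub_succ]
    push_cast
    ring
  rw [Finset.sum_congr rfl h1, Finset.sum_add_distrib]
  have h2 : ∀ j ∈ Finset.range (n + 1),
      m * ((n.choose j : ℝ) * m ^ (n - j) * f j) =
      (n.choose j : ℝ) * m ^ (n + 1 - j) * f j := by
    intro j hj
    simp only [Finset.mem_range] at hj
    rw [show n + 1 - j = (n - j) + 1 by omega, pow_succ]
    ring
  rw [Finset.sum_congr rfl h2,
    Finset.sum_range_succ' (fun j => (n.choose j : ℝ) * m ^ (n + 1 - j) * f j) n]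
  have h3 : ∑ j ∈ Finset.range (n + 1), (n.choose (j + 1) : ℝ) * m ^ (n - j) * f (j + 1) =
      ∑ j ∈ Finset.range n, (n.choose (j + 1) : ℝ) * m ^ (n + 1 - (j + 1)) * f (j + 1) := by
    rw [Finset.sum_range_succ]
    simp only [Nat.choose_succ_self, Nat.cast_zero, zero_mul, add_zero]
    apply Finset.sum_congr rfl
    intro j hj
    simp only [Finset.mem_range] at hj
    rw [show n + 1 - (j + 1) = n - j by omega]
  rw [h3]
  simp
  ring

lemma rWhitney_key (m r : ℝ) : ∀ n t, rWhitney m r (n + 1) (t + 1) =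
    r * rWhitney m r n (t + 1) +
    ∑ j ∈ Finset.range (n + 1), (n.choose j : ℝ) * m ^ (n - j) * rWhitney m r j t := by
  intro n
  induction n with
  | zero =>
    intro t
    cases t <;> simp [rWhitney]
  | succ n ih =>
    intro t
    have hsplit := sum_split m (fun j => rWhitney m r j t) n
    rw [rWhitney_ss m r (n + 1) t, hsplit]
    cases t with
    | zero =>
      have hstep : ∀ j ∈ Finset.range (n + 1),
          (n.choose j : ℝ) * m ^ (n - j) * rWhitney m r (j + 1) 0 =
          r * ((n.choose j : ℝ) * m ^ (n - j) * rWhitney m r j 0) := by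
        intro j hj
        show (n.choose j : ℝ) * m ^ (n - j) * (r * rWhitney m r j 0) = _
        ring
      rw [Finset.sum_congr rfl hstep, ← Finset.mul_sum]
      have h0 := ih 0
      have h1 := rWhitney_ss m r n 0
      have h2 : rWhitney m r (n + 1) 0 = r * rWhitney m r n 0 := rfl
      push_cast at h0 h1 ⊢
      linear_combination h2 + (m + r) * h0 - r * h1
    | succ t =>
      have hstep : ∀ j ∈ Finset.range (n + 1),
          (n.choose j : ℝ) * m ^ (n - j) * rWhitney m r (j + 1) (t + 1) =
          (n.choose j : ℝ) * m ^ (n - j) * rWhitney m r j t +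
          (m * ((t : ℝ) + 1) + r) * ((n.choose j : ℝ) * m ^ (n - j) * rWhitney m r j (t + 1)) := by
        intro j hj
        rw [rWhitney_ss]
        ring
      rw [Finset.sum_congr rfl hstep, Finset.sum_add_distrib, ← Finset.mul_sum]
      have h0 := ih t
      have h1 := ih (t + 1)
      have h3 := rWhitney_ss m r n (t + 1)
      push_cast at h0 h1 h3 ⊢
      linear_combination h0 + (m * ((t : ℝ) + 2) + r) * h1 - r * h3

theorem rDowlingNum_single_step (n : ℕ) (m r : ℝ) :
    rDowlingNum m r (n + 1) =
      (∑ k ∈ Finset.range (n + 1),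
        (n.choose k : ℝ) * m ^ (n - k) * rDowlingNum m r k) +
      r * rDowlingNum m r n := by
  have hD : ∀ j ∈ Finset.range (n + 1),
      ∑ t ∈ Finset.range (n + 1), rWhitney m r j t = rDowlingNum m r j := by
    intro j hj
    simp only [Finset.mem_range] at hj
    rw [rDowlingNum]
    symm
    apply Finset.sum_subset
    · intro x hx
      simp only [Finset.mem_range] at *
      omega
    · intro x hx hx'
      simp only [Finset.mem_range] at *
      exact rWhitney_zero_of_lt m r j x (by omega)
  rw [rDowlingNum]
  rw [Finset.sum_range_succ' (fun t => rWhitney m r (n + 1) t) (n + 1)]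
  have hterm : ∀ t ∈ Finset.range (n + 1), rWhitney m r (n + 1) (t + 1) =
      r * rWhitney m r n (t + 1) +
      ∑ j ∈ Finset.range (n + 1), (n.choose j : ℝ) * m ^ (n - j) * rWhitney m r j t :=
    fun t _ => rWhitney_key m r n t
  rw [Finset.sum_congr rfl hterm, Finset.sum_add_distrib, Finset.sum_comm]
  have h0 : rWhitney m r (n + 1) 0 = r * rWhitney m r n 0 := rfl
  rw [h0]
  have hswap : ∑ j ∈ Finset.range (n + 1), ∑ t ∈ Finset.range (n + 1),
      (n.choose j : ℝ) * m ^ (n - j) * rWhitney m r j t =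
      ∑ j ∈ Finset.range (n + 1), (n.choose j : ℝ) * m ^ (n - j) * rDowlingNum m r j := by
    apply Finset.sum_congr rfl
    intro j hj
    rw [← Finset.mul_sum, hD j hj]
  rw [hswap]
  have hrD : r * rWhitney m r n 0 + ∑ t ∈ Finset.range (n + 1), r * rWhitney m r n (t + 1) =
      r * rDowlingNum m r n := by
    rw [← Finset.mul_sum, rDowlingNum,
      Finset.sum_range_succ (fun t => rWhitney m r n (t + 1)) n,
      rWhitney_zero_of_lt m r n (n + 1) (by omega),
      Finset.sum_range_succ' (fun t => rWhitney m r n t) n]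
    ring
  linarith [hrD]
end
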